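/- arXiv:2409.03199 — 5 statements merged into one kernel-verified Lean document; each statement's English description precedes it below -/
import Mathlib

section
/- Let X be a well-quasi-order. For a nonempty finite set S = {s_0, ..., s_{p-1}} ⊆ X, let φ(S) be the ω-length word (s_0 s_1 ⋯ s_{p-1})^ω. Then φ(S) is indecomposable, and φ is monotonic: if S ≤ T in the domination order, then φ(S) ≤ φ(T) in the word embedding order. In particular, φ(S) is well-defined up to equivalence, independent of the chosen enumeration of S. -/
open Ordinal Set

/-- A preorder is a well-quasi-order if every infinite sequence has an
increasing pair. -/
def IsWQO (X : Type*) [Preorder X] : Prop :=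
  ∀ f : ℕ → X, ∃ i j : ℕ, i < j ∧ f i ≤ f j

/-- The maximal order type of a well-quasi-order: the supremum of the order
types of well-ordered linear extensions of the associated partial order
(the antisymmetrization, i.e. the quotient by equivalences). -/
noncomputable def maxOrderType (X : Type*) [Preorder X] : Ordinal :=
  sSup { o : Ordinal |
    ∃ (r : Antisymmetrization X (· ≤ ·) → Antisymmetrization X (· ≤ ·) → Prop)
      (wo : IsWellOrder (Antisymmetrization X (· ≤ ·)) r),
      (∀ a b : Antisymmetrization X (· ≤ ·), a < b → r a b) ∧
      o = @Ordinal.type _ r wo }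

/-- Embeddability of ω-words. -/
def OmegaEmb {X : Type*} [Preorder X] (s t : ℕ → X) : Prop :=
  ∃ φ : ℕ → ℕ, StrictMono φ ∧ ∀ i, s i ≤ t (φ i)

/-- Two ω-words are equivalent if each embeds in the other. -/
def OmegaEquiv {X : Type*} [Preorder X] (s t : ℕ → X) : Prop :=
  OmegaEmb s t ∧ OmegaEmb t s

/-- An ω-word is indecomposable if it is equivalent to each of its
(nonempty) tails. -/
def IndecW {X : Type*} [Preorder X] (s : ℕ → X) : Prop :=
  ∀ k : ℕ, OmegaEquiv s (fun i => s (i + k))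

/-- The ω-word (l₀ l₁ ⋯ l_{p-1})^ω obtained by repeating a nonempty list. -/
def periodicWord {X : Type*} (l : List X) (hl : l ≠ []) : ℕ → X :=
  fun i => l.get ⟨i % l.length, Nat.mod_lt _ (List.length_pos_iff.mpr hl)⟩

lemma periodicWord_emb {X : Type*} [Preorder X] (l m : List X) (hl : l ≠ []) (hm : m ≠ [])
    (h : ∀ a ∈ l, ∃ b ∈ m, a ≤ b) :
    OmegaEmb (periodicWord l hl) (periodicWord m hm) := by
  have hq : 0 < m.length := List.length_pos_iff.mpr hm
  have hp : 0 < l.length := List.length_pos_iff.mpr hl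
  have key : ∀ i : ℕ, ∃ n : Fin m.length,
      l.get ⟨i % l.length, Nat.mod_lt _ hp⟩ ≤ m.get n := by
    intro i
    obtain ⟨b, hb, hab⟩ := h _ (l.get_mem _)
    obtain ⟨n, rfl⟩ := List.mem_iff_get.mp hb
    exact ⟨n, hab⟩
  choose pos hpos using key
  let φ : ℕ → ℕ := fun i => Nat.rec ((pos 0 : Fin m.length) : ℕ)
    (fun n prev => (prev / m.length + 1) * m.length + (pos (n+1) : ℕ)) i
  have hstep : ∀ n, φ n < φ (n+1) := by
    intro n
    have h1 : φ n < (φ n / m.length + 1) * m.length := by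
      rw [add_mul, one_mul]
      calc φ n = φ n / m.length * m.length + φ n % m.length := (Nat.div_add_mod' _ _).symm
        _ < φ n / m.length * m.length + m.length := by
            have := Nat.mod_lt (φ n) hq
            omega
    calc φ n < (φ n / m.length + 1) * m.length := h1
      _ ≤ φ (n+1) := Nat.le_add_right _ _
  have hmono : StrictMono φ := strictMono_nat_of_lt_succ hstep
  have hmod : ∀ i, φ i % m.length = (pos i : ℕ) := by
    intro i
    cases i with
    | zero => exact Nat.mod_eq_of_lt (pos 0).2
    | succ n =>
      show ((φ n / m.length + 1) * m.length + (pos (n+1) : ℕ)) % m.length = _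
      rw [add_comm, Nat.add_mul_mod_self_right]
      exact Nat.mod_eq_of_lt (pos (n+1)).2
  refine ⟨φ, hmono, fun i => ?_⟩
  have heq : periodicWord m hm (φ i) = m.get (pos i) := by
    unfold periodicWord
    congr 1
    exact Fin.ext (hmod i)
  rw [heq]
  exact hpos i

lemma periodicWord_indec {X : Type*} [Preorder X] (l : List X) (hl : l ≠ []) :
    IndecW (periodicWord l hl) := by
  have hp : 0 < l.length := List.length_pos_iff.mpr hl
  intro k
  obtain ⟨p', hp'⟩ : ∃ p', l.length = p' + 1 := ⟨l.length - 1, by omega⟩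
  constructor
  · refine ⟨fun i => i + k * p', fun a b hab => Nat.add_lt_add_right hab _, fun i => ?_⟩
    have he : i + k * p' + k = i + k * l.length := by rw [hp']; ring
    have : periodicWord l hl (i + k * p' + k) = periodicWord l hl i := by
      unfold periodicWord
      congr 1
      apply Fin.ext
      show (i + k * p' + k) % l.length = i % l.length
      rw [he, Nat.add_mul_mod_self_right]
    exact le_of_eq this.symm
  · exact ⟨fun i => i + k, fun a b hab => Nat.add_lt_add_right hab _, fun i => le_refl _⟩

/-- For a nonempty finite S = {s₀,…,s_{p-1}} ⊆ X, the word (s₀⋯s_{p-1})^ω is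
indecomposable; the construction is monotonic with respect to the domination
order; and it is well-defined up to equivalence, independently of the chosen
enumeration. -/
theorem periodicWord_indec_mono (X : Type*) [Preorder X] (hX : IsWQO X)
    (l m : List X) (hl : l ≠ []) (hm : m ≠ []) :
    IndecW (periodicWord l hl) ∧
    ((∀ a ∈ l, ∃ b ∈ m, a ≤ b) → OmegaEmb (periodicWord l hl) (periodicWord m hm)) ∧
    ((∀ x : X, x ∈ l ↔ x ∈ m) → OmegaEquiv (periodicWord l hl) (periodicWord m hm)) := by
  refine ⟨periodicWord_indec l hl, periodicWord_emb l m hl hm, fun hiff => ?_⟩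
  exact ⟨periodicWord_emb l m hl hm (fun a ha => ⟨a, (hiff a).mp ha, le_refl a⟩),
    periodicWord_emb m l hm hl (fun a ha => ⟨a, (hiff a).mpr ha, le_refl a⟩)⟩
end

section
/- Let X be a well-quasi-order and let s : ω → X be a word of length ω with finite image. Then s is equivalent (mutually embeddable) to a word of the form u · (t_0 t_1 ⋯ t_{p-1})^ω, where u is a finite word over X and {t_0, ..., t_{p-1}} is the set of elements of X occurring infinitely often in s. In particular, every finite-image word of length ω has an indecomposable tail. -/
open Ordinal Set

/-- The word u · w^ω : a finite word u followed by an ω-word w. -/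
def concatWord {X : Type*} (u : List X) (w : ℕ → X) : ℕ → X :=
  fun i => if h : i < u.length then u.get ⟨i, h⟩ else w (i - u.length)


lemma shift_infinite {S : Set ℕ} (hS : S.Infinite) (M : ℕ) :
    {j : ℕ | j + M ∈ S}.Infinite := by
  have h1 : (S \ Set.Iio M).Infinite := hS.diff (Set.finite_Iio M)
  have h2 : S \ Set.Iio M ⊆ (· + M) '' {j : ℕ | j + M ∈ S} := by
    intro n hn
    have hM : M ≤ n := not_lt.mp hn.2
    exact ⟨n - M, by simpa [Nat.sub_add_cancel hM] using hn.1, Nat.sub_add_cancel hM⟩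
  exact Set.Infinite.of_image _ (h1.mono h2)

noncomputable def embFun {X : Type*} [Preorder X] (a b : ℕ → X) (N : ℕ)
    (h2 : ∀ i, N ≤ i → {j | b j = a i}.Infinite) : ℕ → ℕ
  | 0 => if h : N ≤ 0 then ((h2 0 h).exists_gt 0).choose else 0
  | (i+1) => if h : N ≤ i + 1 then
      ((h2 (i+1) h).exists_gt (embFun a b N h2 i)).choose
    else i + 1

lemma embFun_id {X : Type*} [Preorder X] (a b : ℕ → X) (N : ℕ)
    (h2 : ∀ i, N ≤ i → {j | b j = a i}.Infinite) :
    ∀ i < N, embFun a b N h2 i = i := by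
  intro i hi
  cases i with
  | zero => simp [embFun, Nat.not_le.mpr hi]
  | succ n => simp [embFun, Nat.not_le.mpr hi]

lemma embFun_mem {X : Type*} [Preorder X] (a b : ℕ → X) (N : ℕ)
    (h2 : ∀ i, N ≤ i → {j | b j = a i}.Infinite) :
    ∀ i, N ≤ i → b (embFun a b N h2 i) = a i := by
  intro i hi
  cases i with
  | zero => simpa [embFun, hi] using ((h2 0 hi).exists_gt 0).choose_spec.1
  | succ n =>
      simpa [embFun, hi] using
        ((h2 (n+1) hi).exists_gt (embFun a b N h2 n)).choose_spec.1

lemma embFun_mono {X : Type*} [Preorder X] (a b : ℕ → X) (N : ℕ)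
    (h2 : ∀ i, N ≤ i → {j | b j = a i}.Infinite) :
    StrictMono (embFun a b N h2) := by
  apply strictMono_nat_of_lt_succ
  intro i
  by_cases h : N ≤ i + 1
  · have := ((h2 (i+1) h).exists_gt (embFun a b N h2 i)).choose_spec.2
    simpa [embFun, h] using this
  · have hi : i < N := by omega
    rw [embFun_id a b N h2 i (by omega), embFun_id a b N h2 (i+1) (by omega)]
    omega

lemma emb_of_eq {X : Type*} [Preorder X] (a b : ℕ → X) (N : ℕ)
    (h1 : ∀ i < N, a i = b i)
    (h2 : ∀ i, N ≤ i → {j | b j = a i}.Infinite) :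
    OmegaEmb a b := by
  refine ⟨embFun a b N h2, embFun_mono a b N h2, fun i => ?_⟩
  by_cases hi : i < N
  · rw [embFun_id a b N h2 i hi]; exact le_of_eq (h1 i hi)
  · exact le_of_eq (embFun_mem a b N h2 i (not_lt.mp hi)).symm

/-- Every finite-image ω-word is equivalent to u · (t₀⋯t_{p-1})^ω where
{t₀,…,t_{p-1}} is the set of elements occurring infinitely often; in
particular it has an indecomposable tail. -/
theorem omegaWord_normal_form (X : Type*) [Preorder X] (hX : IsWQO X)
    (s : ℕ → X) (hs : (Set.range s).Finite) :
    (∃ (u : List X) (t : List X) (ht : t ≠ []),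
      (∀ x : X, x ∈ t ↔ {i : ℕ | s i = x}.Infinite) ∧
      OmegaEquiv s (concatWord u (periodicWord t ht))) ∧
    ∃ k : ℕ, IndecW (fun i => s (i + k)) := by
  classical
  set T : Set X := {x | {i : ℕ | s i = x}.Infinite} with hT
  have hTsub : T ⊆ Set.range s := by
    intro x hx
    obtain ⟨i, hi⟩ := hx.nonempty
    exact ⟨i, hi⟩
  have hTfin : T.Finite := hs.subset hTsub
  have hBfin : {i : ℕ | ¬ {j : ℕ | s j = s i}.Infinite}.Finite := by
    have hsub : {i : ℕ | ¬ {j : ℕ | s j = s i}.Infinite} ⊆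
        ⋃ x ∈ (Set.range s \ T), {i : ℕ | s i = x} := by
      intro i hi
      exact Set.mem_biUnion ⟨⟨i, rfl⟩, hi⟩ rfl
    refine Set.Finite.subset (Set.Finite.biUnion (hs.diff (t := T)) ?_) hsub
    intro x hx
    exact Set.not_infinite.mp hx.2
  obtain ⟨m, hm⟩ := hBfin.bddAbove
  set N := m + 1 with hNdef
  have hsN : ∀ i, N ≤ i → {j : ℕ | s j = s i}.Infinite := by
    intro i hi
    by_contra h
    have : i ≤ m := hm h
    omega
  set t : List X := hTfin.toFinset.toList with htdef
  have ht_mem : ∀ x, x ∈ t ↔ x ∈ T := by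
    intro x; simp [htdef, Set.Finite.mem_toFinset]
  have htne : t ≠ [] := List.ne_nil_of_mem ((ht_mem (s N)).mpr (hsN N le_rfl))
  have hp : 0 < t.length := List.length_pos_iff.mpr htne
  set u : List X := List.ofFn (fun i : Fin N => s i) with hudef
  have hu_len : u.length = N := List.length_ofFn
  set w : ℕ → X := periodicWord t htne with hwdef
  have hconcat_lt : ∀ i < N, concatWord u w i = s i := by
    intro i hi
    have h' : i < u.length := by omega
    have h1 : concatWord u w i = u.get ⟨i, h'⟩ := dif_pos h'
    rw [h1]
    show (List.ofFn fun j : Fin N => s j).get ⟨i, by rw [List.length_ofFn]; exact hi⟩ = s i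
    rw [List.get_ofFn]
    rfl
  have hconcat_ge : ∀ i, N ≤ i → concatWord u w i = w (i - N) := by
    intro i hi
    have h' : ¬ i < u.length := by omega
    have h1 : concatWord u w i = w (i - u.length) := dif_neg h'
    rw [h1, hu_len]
  have hwT : ∀ j, w j ∈ T := by
    intro j
    exact (ht_mem _).mp (t.get_mem _)
  have emb1 : OmegaEmb s (concatWord u w) := by
    apply emb_of_eq s (concatWord u w) N
    · intro i hi; exact (hconcat_lt i hi).symm
    · intro i hi
      obtain ⟨k, hk⟩ := List.mem_iff_get.mp ((ht_mem (s i)).mpr (hsN i hi))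
      apply Set.infinite_of_injective_forall_mem
        (f := fun m : ℕ => N + (k.1 + m * t.length))
      · intro x y hxy
        simp only at hxy
        exact Nat.eq_of_mul_eq_mul_right hp
          (Nat.add_left_cancel (Nat.add_left_cancel hxy))
      · intro a
        show concatWord u w (N + (k.1 + a * t.length)) = s i
        rw [hconcat_ge _ (Nat.le_add_right _ _), Nat.add_sub_cancel_left]
        show t.get ⟨(k.1 + a * t.length) % t.length, _⟩ = s i
        rw [← hk]
        congr 1
        exact Fin.ext (by simp [Nat.add_mul_mod_self_right, Nat.mod_eq_of_lt k.2])
  have emb2 : OmegaEmb (concatWord u w) s := by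
    apply emb_of_eq (concatWord u w) s N
    · exact hconcat_lt
    · intro i hi
      have := hwT (i - N)
      rw [hconcat_ge i hi]
      exact this
  refine ⟨⟨u, t, htne, fun x => ht_mem x, emb1, emb2⟩, N, ?_⟩
  intro k'
  constructor
  · apply emb_of_eq _ _ 0
    · intro i hi; omega
    · intro i _
      have base : {n : ℕ | s n = s (i + N)}.Infinite := hsN _ (by omega)
      have := shift_infinite base (k' + N)
      simpa [Nat.add_assoc] using this
  · apply emb_of_eq _ _ 0
    · intro i hi; omega
    · intro i _
      have base : {n : ℕ | s n = s (i + k' + N)}.Infinite := hsN _ (by omega)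
      have := shift_infinite base N
      simpa [Nat.add_assoc] using this
end

section
/- Let X be a well-quasi-order and s : ω → X a finite-image word of length ω that is indecomposable. Then s is equivalent to (t_0 t_1 ⋯ t_{p-1})^ω, where {t_0, ..., t_{p-1}} is the (nonempty, finite) set of elements occurring infinitely often in s. Consequently, the map S ↦ (elements of S listed and repeated ω times) from nonempty finite subsets of X to indecomposable ω-words is surjective up to equivalence. -/
open Ordinal Set

private lemma omegaEmb_trans {X : Type*} [Preorder X] {a b c : ℕ → X}
    (h1 : OmegaEmb a b) (h2 : OmegaEmb b c) : OmegaEmb a c := by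
  obtain ⟨φ, hφ, hab⟩ := h1
  obtain ⟨ψ, hψ, hbc⟩ := h2
  exact ⟨ψ ∘ φ, hψ.comp hφ, fun i => (hab i).trans (hbc (φ i))⟩

private noncomputable def greedy (S : ℕ → Set ℕ) (h : ∀ i, (S i).Infinite) : ℕ → ℕ
  | 0 => ((h 0).exists_gt 0).choose
  | i + 1 => ((h (i + 1)).exists_gt (greedy S h i)).choose

private lemma greedy_mem (S : ℕ → Set ℕ) (h : ∀ i, (S i).Infinite) (i : ℕ) :
    greedy S h i ∈ S i := by
  cases i with
  | zero => exact ((h 0).exists_gt 0).choose_spec.1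
  | succ n => exact ((h (n + 1)).exists_gt (greedy S h n)).choose_spec.1

private lemma greedy_strictMono (S : ℕ → Set ℕ) (h : ∀ i, (S i).Infinite) :
    StrictMono (greedy S h) := by
  apply strictMono_nat_of_lt_succ
  intro n
  exact ((h (n + 1)).exists_gt (greedy S h n)).choose_spec.2

private lemma emb_of_eq_s10 {X : Type*} [Preorder X] (u v : ℕ → X)
    (h : ∀ i, {j : ℕ | v j = u i}.Infinite) : OmegaEmb u v :=
  ⟨greedy _ h, greedy_strictMono _ h, fun i => (greedy_mem _ h i).ge⟩

/-- Every indecomposable finite-image ω-word is equivalent to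
(t₀⋯t_{p-1})^ω where {t₀,…,t_{p-1}} is the (nonempty, finite) set of elements
occurring infinitely often; hence S ↦ (enumeration of S)^ω is surjective, up to
equivalence, onto indecomposable ω-words. -/
theorem indec_omegaWord_periodic (X : Type*) [Preorder X] (hX : IsWQO X)
    (s : ℕ → X) (hs : (Set.range s).Finite) (hind : IndecW s) :
    ∃ (t : List X) (ht : t ≠ []),
      (∀ x : X, x ∈ t ↔ {i : ℕ | s i = x}.Infinite) ∧
      OmegaEquiv s (periodicWord t ht) := by
  classical
  set T : Set X := {x | {i : ℕ | s i = x}.Infinite} with hTdef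
  have hTsub : T ⊆ Set.range s := by
    intro x hx
    obtain ⟨i, hi⟩ := hx.nonempty
    exact ⟨i, hi⟩
  have hT : T.Finite := hs.subset hTsub
  have hTne : T.Nonempty := by
    by_contra h
    rw [Set.not_nonempty_iff_eq_empty] at h
    have hfin : ∀ x : X, ({i : ℕ | s i = x}).Finite := by
      intro x
      rw [← Set.not_infinite]
      intro hx
      have : x ∈ T := hx
      simp [h] at this
    have hsub : (Set.univ : Set ℕ) ⊆ ⋃ x ∈ Set.range s, {i : ℕ | s i = x} :=
      fun i _ => Set.mem_biUnion ⟨i, rfl⟩ rfl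
    exact Set.infinite_univ ((hs.biUnion fun x _ => hfin x).subset hsub)
  refine ⟨hT.toFinset.toList, ?_, ?_, ?_⟩
  · simp only [ne_eq, Finset.toList_eq_nil, Set.Finite.toFinset_eq_empty]
    exact hTne.ne_empty
  · intro x
    simp only [Finset.mem_toList, Set.Finite.mem_toFinset]
    rfl
  · set t : List X := hT.toFinset.toList with htdef
    have htmem : ∀ x : X, x ∈ t ↔ x ∈ T := by
      intro x; simp [htdef, Finset.mem_toList, Set.Finite.mem_toFinset]
    have ht : t ≠ [] := by
      simp only [htdef, ne_eq, Finset.toList_eq_nil, Set.Finite.toFinset_eq_empty]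
      exact hTne.ne_empty
    have hp : 0 < t.length := List.length_pos_iff.mpr ht
    -- all periodic word values are in T
    have hper_mem : ∀ i : ℕ, periodicWord t ht i ∈ T := by
      intro i
      exact (htmem _).mp (List.get_mem t _)
    -- find N beyond which all values of s are in T
    have hB : (⋃ x ∈ {y ∈ Set.range s | ¬ {i : ℕ | s i = y}.Infinite},
        {i : ℕ | s i = x}).Finite := by
      apply Set.Finite.biUnion (hs.subset (fun x hx => hx.1))
      intro x hx
      exact Set.not_infinite.mp hx.2
    obtain ⟨N, hN⟩ := hB.bddAbove
    have htail : ∀ i : ℕ, s (i + (N + 1)) ∈ T := by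
      intro i
      by_contra hx
      have : i + (N + 1) ∈ ⋃ x ∈ {y ∈ Set.range s | ¬ {i : ℕ | s i = y}.Infinite},
          {j : ℕ | s j = x} := Set.mem_biUnion ⟨⟨i + (N + 1), rfl⟩, hx⟩ rfl
      have := hN this
      omega
    constructor
    · -- s embeds into periodic word
      refine omegaEmb_trans (hind (N + 1)).1 (emb_of_eq_s10 _ _ ?_)
      intro i
      obtain ⟨k, hk⟩ := List.mem_iff_get.mp ((htmem _).mpr (htail i))
      apply Set.infinite_of_injective_forall_mem
        (f := fun m : ℕ => (k : ℕ) + m * t.length)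
      · intro a b hab
        simp only at hab
        exact Nat.eq_of_mul_eq_mul_right hp (Nat.add_left_cancel hab)
      · intro m
        show periodicWord t ht _ = _
        unfold periodicWord
        rw [← hk]
        congr 1
        ext
        simp [Nat.add_mul_mod_self_right, Nat.mod_eq_of_lt k.isLt]
    · -- periodic word embeds into s
      exact emb_of_eq_s10 _ _ fun i => hper_mem i
end

section
/- Define u(0) = 1, u(β) = h(-1 + 2^{β-1}) for β a successor ordinal, and u(β) = ω^{ω^{2^β}} for β a limit ordinal, where h is the De Jongh–Parikh–Schmidt function with o(X*) = h(o(X)), given by h(0)=1, h(n)=ω^{ω^{n-1}} for 0<n<ω, h(ε+k)=ω^{ω^{(ε+k)+1}} for ε an epsilon number and k finite, and h(β)=ω^{ω^β} otherwise. Then the function u is continuous at limit ordinals: for every limit ordinal λ, u(λ) = sup_{β<λ} u(β). -/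
open Ordinal Set

open scoped Classical in
/-- The De Jongh–Parikh–Schmidt function h, with o(X*) = h(o(X)):
h(0) = 1; h(n) = ω^(ω^(n-1)) for 0 < n < ω; h(ε+k) = ω^(ω^((ε+k)+1)) for ε an
epsilon number and k finite; h(β) = ω^(ω^β) otherwise. -/
noncomputable def djpsH (β : Ordinal) : Ordinal :=
  if β = 0 then 1
  else if β < omega0 then omega0 ^ omega0 ^ (β - 1)
  else if ∃ ε k : Ordinal, omega0 ^ ε = ε ∧ k < omega0 ∧ β = ε + k then
    omega0 ^ omega0 ^ (β + 1)
  else omega0 ^ omega0 ^ β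

open scoped Classical in
/-- The function u: u(0) = 1; u(β) = h(-1 + 2^(β-1)) for β a successor;
u(β) = ω^(ω^(2^β)) for β a limit.  Here -1 + γ is the ordinal γ' with
1 + γ' = γ (for γ ≥ 1), i.e. γ - 1. -/
noncomputable def lowerU (β : Ordinal) : Ordinal :=
  if β = 0 then 1
  else if ∃ γ : Ordinal, β = γ + 1 then djpsH ((2 : Ordinal) ^ (β - 1) - 1)
  else omega0 ^ omega0 ^ ((2 : Ordinal) ^ β)

private lemma omono {a b : Ordinal} (h : a ≤ b) : omega0 ^ omega0 ^ a ≤ omega0 ^ omega0 ^ b :=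
  opow_le_opow_right omega0_pos (opow_le_opow_right omega0_pos h)

private lemma djpsH_le (x : Ordinal) : djpsH x ≤ omega0 ^ omega0 ^ (x + 1) := by
  unfold djpsH
  split_ifs with h1 h2 h3
  · exact Order.one_le_iff_pos.2 (opow_pos _ omega0_pos)
  · exact omono ((sub_le_self x 1).trans (self_le_add_right x 1))
  · exact le_rfl
  · exact omono (self_le_add_right x 1)

private lemma le_djpsH {x : Ordinal} (hx : x ≠ 0) :
    omega0 ^ omega0 ^ (x - 1) ≤ djpsH x := by
  unfold djpsH
  split_ifs with h1 h2 h3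
  · exact absurd h1 hx
  · exact le_rfl
  · exact omono ((sub_le_self x 1).trans (self_le_add_right x 1))
  · exact omono (sub_le_self x 1)

private lemma one_add_le (γ : Ordinal) : 1 + γ ≤ γ + 1 := by
  rcases lt_or_ge γ omega0 with h | h
  · obtain ⟨n, rfl⟩ := lt_omega0.1 h
    rw [← Nat.cast_one, ← Nat.cast_add, ← Nat.cast_add, Nat.add_comm]
  · rw [one_add_of_omega0_le h]
    exact self_le_add_right γ 1

private lemma succ_sub_one_ge (γ : Ordinal) : γ ≤ γ + 1 - 1 :=
  (le_sub_of_le (by simpa using le_add_left 1 γ)).2 (one_add_le γ)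

/-- key lower bound : f d ≤ lowerU (d + 2) for d ≥ 1 -/
private lemma key_lower {d : Ordinal} (hd : 1 ≤ d) :
    omega0 ^ omega0 ^ ((2 : Ordinal) ^ d) ≤ lowerU (d + 2) := by
  have h2 : (1:Ordinal) < 2 := one_lt_two
  have hmono := (isNormal_opow h2).strictMono.monotone
  have he : d + 1 ≤ d + 2 - 1 := by
    have h : d + 2 = (d + 1) + 1 := by rw [add_assoc]; norm_num
    rw [h]; exact succ_sub_one_ge (d + 1)
  set x : Ordinal := (2 : Ordinal) ^ (d + 2 - 1) - 1 with hxdef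
  have hdd : (2:Ordinal) ≤ 2 ^ d := by
    calc (2:Ordinal) = 2 ^ (1:Ordinal) := (opow_one 2).symm
      _ ≤ 2 ^ d := hmono hd
  have hxpow : (2:Ordinal)^(d+1) = 2^d + 2^d := by
    rw [opow_add, opow_one, (by norm_num : (2:Ordinal) = 1 + 1), mul_add, mul_one]
  have h1x : 1 + (1 + (2:Ordinal)^d) ≤ 2 ^ (d + 2 - 1) := by
    calc 1 + (1 + (2:Ordinal)^d) = 2 + 2^d := by rw [← add_assoc]; norm_num
      _ ≤ 2^d + 2^d := add_le_add_left hdd _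
      _ = 2^(d+1) := hxpow.symm
      _ ≤ 2 ^ (d + 2 - 1) := hmono he
  have h2x : 1 + (2:Ordinal)^d ≤ x :=
    (le_sub_of_le (Order.one_le_iff_pos.2 (opow_pos _ two_pos))).2 h1x
  have h1lex : (1:Ordinal) ≤ x :=
    le_trans (self_le_add_right 1 _) h2x
  have hx0 : x ≠ 0 := by
    intro h; rw [h] at h1lex; exact absurd h1lex (by norm_num)
  have hkey : (2:Ordinal) ^ d ≤ x - 1 := (le_sub_of_le h1lex).2 h2x
  calc omega0 ^ omega0 ^ ((2 : Ordinal) ^ d) ≤ omega0 ^ omega0 ^ (x - 1) := omono hkey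
    _ ≤ djpsH x := le_djpsH hx0
    _ = lowerU (d + 2) := by
        unfold lowerU
        rw [if_neg (by simp [Ordinal.add_eq_zero_iff]), if_pos ⟨d + 1, by rw [add_assoc]; norm_num⟩]

/-- The function u is continuous: at every limit ordinal λ,
u(λ) = sup_{β<λ} u(β). -/
theorem lowerU_continuous (l : Ordinal) (hl : Order.IsSuccLimit l) :
    lowerU l = sSup (lowerU '' Set.Iio l) := by
  have h2 : (1:Ordinal) < 2 := one_lt_two
  have hn2 := isNormal_opow h2
  have hω := isNormal_opow one_lt_omega0
  have hf : Order.IsNormal (fun x : Ordinal => omega0 ^ omega0 ^ ((2:Ordinal) ^ x)) :=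
    (hω.comp hω).comp hn2
  have hul : lowerU l = omega0 ^ omega0 ^ ((2:Ordinal) ^ l) := by
    unfold lowerU
    rw [if_neg hl.pos.ne', if_neg]
    rintro ⟨γ, rfl⟩
    have := hl.succ_lt (Order.lt_succ γ)
    rw [Order.succ_eq_add_one] at this
    exact this.ne rfl
  have hbdd : BddAbove (lowerU '' Iio l) := Ordinal.bddAbove_of_small
  rw [hul]
  apply le_antisymm
  · refine (hf.le_iff_forall_le hl).2 fun b hb => ?_
    set d := max b 1 with hddef
    have hdl : d < l := max_lt hb (one_lt_of_isSuccLimit hl)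
    have hd2 : d + 2 < l := by
      have h1 := hl.succ_lt (hl.succ_lt hdl)
      rw [Order.succ_eq_add_one, Order.succ_eq_add_one, add_assoc] at h1
      norm_num at h1
      exact h1
    have hmem : lowerU (d + 2) ∈ lowerU '' Iio l := ⟨d + 2, hd2, rfl⟩
    calc omega0 ^ omega0 ^ ((2:Ordinal) ^ b)
        ≤ omega0 ^ omega0 ^ ((2:Ordinal) ^ d) :=
          omono (hn2.strictMono.monotone (le_max_left b 1))
      _ ≤ lowerU (d + 2) := key_lower (le_max_right b 1)
      _ ≤ sSup (lowerU '' Iio l) := le_csSup hbdd hmem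
  · refine csSup_le ⟨lowerU 0, 0, hl.pos, rfl⟩ ?_
    rintro x ⟨β, hβ, rfl⟩
    unfold lowerU
    split_ifs with h0 hs
    · exact Order.one_le_iff_pos.2 (opow_pos _ omega0_pos)
    · refine (djpsH_le _).trans (omono ?_)
      have h1 : (2:Ordinal) ^ (β - 1) - 1 + 1 ≤ 2 ^ β + 1 :=
        add_le_add_left ((sub_le_self _ 1).trans
          (hn2.strictMono.monotone (sub_le_self β 1))) 1
      have h2' : (2:Ordinal) ^ β + 1 ≤ 2 ^ (β + 1) := by
        have e : (2:Ordinal) ^ (β+1) = 2^β + 2^β := by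
          calc (2:Ordinal) ^ (β+1) = 2^β * 2 := by rw [opow_add, opow_one]
            _ = 2^β * (1+1) := by norm_num
            _ = 2^β + 2^β := by rw [mul_add, mul_one]
        rw [e]
        exact add_le_add_right (Order.one_le_iff_pos.2 (opow_pos _ two_pos)) _
      have h3 : (2:Ordinal) ^ (β + 1) ≤ 2 ^ l := by
        refine hn2.strictMono.monotone ?_
        have := hl.succ_lt hβ
        rw [Order.succ_eq_add_one] at this
        exact this.le
      exact h1.trans (h2'.trans h3)
    · exact omono (hn2.strictMono.monotone hβ.le)
end

section
/- Let X be a finite quasi-order and s a finite-image word over X of length exactly ω². Then s is equivalent (mutually embeddable) to a word of the form w · (u_1 ⋯ u_m)^ω, where w is a word of length < ω² that is a finite concatenation of words each of length ≤ ω, and u_1, ..., u_m are words of length exactly ω; i.e., every length-ω² word over a finite alphabet is, up to equivalence, an initial segment followed by a periodic repetition of finitely many ω-words. -/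
open Ordinal Set

/-- Embeddability of words indexed by linear orders. -/
def WEmb {ι κ X : Type*} [LinearOrder ι] [LinearOrder κ] [Preorder X]
    (s : ι → X) (t : κ → X) : Prop :=
  ∃ φ : ι → κ, StrictMono φ ∧ ∀ i, s i ≤ t (φ i)

/-- A transfinite word over X. -/
structure TransWord (X : Type u) : Type (u + 1) where
  len : Ordinal.{u}
  val : len.ToType → X

/-- A word of length ≤ ω, encoded as a function ℕ → Option X which is defined
on an initial segment of ℕ. -/
def InitialSeg' {X : Type*} (b : ℕ → Option X) : Prop :=
  ∀ i j : ℕ, i ≤ j → (b j).isSome → (b i).isSome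

/-- The index set of the word w · (u₁ ⋯ u_m)^ω, where w is the concatenation
of the n partial ω-words given by blocks: the indices of w, followed
lexicographically by ω · m further copies of ω. -/
abbrev NFIndex {X : Type*} (n : ℕ) (blocks : Fin n → ℕ → Option X) (m : ℕ) : Type _ :=
  {q : Lex (Fin n × ℕ) // (blocks (ofLex q).1 (ofLex q).2).isSome} ⊕ₗ
    Lex (ℕ × Lex (Fin m × ℕ))

/-- The word w · (u₁ ⋯ u_m)^ω itself. -/
def nfWord {X : Type*} (n : ℕ) (blocks : Fin n → ℕ → Option X) (m : ℕ)
    (u : Fin m → ℕ → X) : NFIndex n blocks m → X :=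
  fun p => match ofLex p with
    | Sum.inl q => (blocks (ofLex q.val).1 (ofLex q.val).2).get q.property
    | Sum.inr r => u (ofLex (ofLex r).2).1 (ofLex (ofLex r).2).2


set_option linter.unusedSectionVars false
set_option linter.unnecessarySeqFocus false

namespace OmegaSqNF

/-- recursive strictly monotone picker -/
lemma pick {P : ℕ → ℕ → Prop} (h : ∀ j b : ℕ, ∃ p, b ≤ p ∧ P j p) :
    ∃ Q : ℕ → ℕ, StrictMono Q ∧ ∀ j, P j (Q j) := by
  choose g hg1 hg2 using h
  refine ⟨fun j => Nat.rec (g 0 0) (fun j q => g (j + 1) (q + 1)) j, ?_, ?_⟩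
  · apply strictMono_nat_of_lt_succ
    intro n
    exact lt_of_lt_of_le (Nat.lt_succ_self _) (hg1 _ _)
  · intro j; cases j <;> apply hg2

lemma unb {S : Set ℕ} (h : S.Infinite) (b : ℕ) : ∃ i, b ≤ i ∧ i ∈ S := by
  by_contra hc
  push_neg at hc
  exact h ((Set.finite_Iio b).subset (fun i hi => by
    by_contra hlt
    exact hc i (not_lt.mp hlt) hi))

variable {X : Type*} [Preorder X] [Finite X]

def Occ (f : ℕ → ℕ → X) (x : X) (i : ℕ) : Prop := ∃ j, f i j = x

def ISet (f : ℕ → ℕ → X) (i : ℕ) : Set X := {x | {j | f i j = x}.Infinite}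

def KSet (f : ℕ → ℕ → X) : Set X := {x | {i | Occ f x i}.Infinite}

def JFam (f : ℕ → ℕ → X) : Set (Set X) := {J | {i | ISet f i = J}.Infinite}

lemma exN (f : ℕ → ℕ → X) :
    ∃ N : ℕ, ∀ i, N ≤ i → (∀ j, f i j ∈ KSet f) ∧ ISet f i ∈ JFam f := by
  have hS1 : {i | ∃ j, f i j ∉ KSet f}.Finite := by
    have : {i | ∃ j, f i j ∉ KSet f} ⊆ ⋃ x ∈ (KSet f)ᶜ, {i | Occ f x i} := by
      rintro i ⟨j, hj⟩
      exact Set.mem_biUnion hj ⟨j, rfl⟩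
    refine (Set.Finite.biUnion (Set.toFinite _) ?_).subset this
    intro x hx
    exact Set.not_infinite.mp hx
  have hS2 : {i | ISet f i ∉ JFam f}.Finite := by
    have : {i | ISet f i ∉ JFam f} ⊆ ⋃ J ∈ (JFam f)ᶜ, {i | ISet f i = J} := by
      intro i hi
      exact Set.mem_biUnion hi rfl
    refine (Set.Finite.biUnion (Set.toFinite _) ?_).subset this
    intro J hJ
    exact Set.not_infinite.mp hJ
  obtain ⟨N, hN⟩ := (hS1.union hS2).bddAbove
  refine ⟨N + 1, fun i hi => ?_⟩
  constructor
  · intro j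
    by_contra hj
    exact absurd (hN (Set.mem_union_left _ ⟨j, hj⟩)) (by omega)
  · by_contra hj
    exact absurd (hN (Set.mem_union_right _ hj)) (by omega)

lemma exL (f : ℕ → ℕ → X) (i : ℕ) : ∃ L : ℕ, ∀ j, L ≤ j → f i j ∈ ISet f i := by
  have hT : {j | f i j ∉ ISet f i}.Finite := by
    have : {j | f i j ∉ ISet f i} ⊆ ⋃ x ∈ (ISet f i)ᶜ, {j | f i j = x} := by
      intro j hj
      exact Set.mem_biUnion hj rfl
    refine (Set.Finite.biUnion (Set.toFinite _) ?_).subset this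
    intro x hx
    exact Set.not_infinite.mp hx
  obtain ⟨L, hL⟩ := hT.bddAbove
  refine ⟨L + 1, fun j hj => ?_⟩
  by_contra hj'
  exact absurd (hL hj') (by omega)

noncomputable def Nf (f : ℕ → ℕ → X) : ℕ := (exN f).choose

lemma Nf_spec (f : ℕ → ℕ → X) : ∀ i, Nf f ≤ i → (∀ j, f i j ∈ KSet f) ∧ ISet f i ∈ JFam f :=
  (exN f).choose_spec

noncomputable def Lf (f : ℕ → ℕ → X) (i : ℕ) : ℕ := (exL f i).choose

lemma Lf_spec (f : ℕ → ℕ → X) (i : ℕ) : ∀ j, Lf f i ≤ j → f i j ∈ ISet f i :=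
  (exL f i).choose_spec

lemma exM (f : ℕ → ℕ → X) :
    ∃ M : ℕ, Nf f < M ∧ (∀ x ∈ KSet f, ∃ c, Nf f ≤ c ∧ c < M ∧ Occ f x c) ∧
      (∀ J ∈ JFam f, ∃ c, Nf f ≤ c ∧ c < M ∧ ISet f c = J) := by
  classical
  have hx : ∀ x : X, ∃ c, x ∈ KSet f → (Nf f ≤ c ∧ Occ f x c) := by
    intro x
    by_cases hx : x ∈ KSet f
    · obtain ⟨c, hc1, hc2⟩ := unb hx (Nf f)
      exact ⟨c, fun _ => ⟨hc1, hc2⟩⟩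
    · exact ⟨0, fun h => absurd h hx⟩
  have hJ : ∀ J : Set X, ∃ c, J ∈ JFam f → (Nf f ≤ c ∧ ISet f c = J) := by
    intro J
    by_cases hJ : J ∈ JFam f
    · obtain ⟨c, hc1, hc2⟩ := unb hJ (Nf f)
      exact ⟨c, fun _ => ⟨hc1, hc2⟩⟩
    · exact ⟨0, fun h => absurd h hJ⟩
  choose cx hcx using hx
  choose cJ hcJ using hJ
  obtain ⟨B1, hB1⟩ := (Set.finite_range cx).bddAbove
  obtain ⟨B2, hB2⟩ := (Set.finite_range cJ).bddAbove
  refine ⟨max (max B1 B2) (Nf f) + 1, by omega, ?_, ?_⟩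
  · intro x hxK
    refine ⟨cx x, (hcx x hxK).1, ?_, (hcx x hxK).2⟩
    have := hB1 (Set.mem_range_self x)
    omega
  · intro J hJF
    refine ⟨cJ J, (hcJ J hJF).1, ?_, (hcJ J hJF).2⟩
    have := hB2 (Set.mem_range_self J)
    omega

noncomputable def Mf (f : ℕ → ℕ → X) : ℕ := (exM f).choose

lemma Mf_spec (f : ℕ → ℕ → X) :
    Nf f < Mf f ∧ (∀ x ∈ KSet f, ∃ c, Nf f ≤ c ∧ c < Mf f ∧ Occ f x c) ∧
      (∀ J ∈ JFam f, ∃ c, Nf f ≤ c ∧ c < Mf f ∧ ISet f c = J) :=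
  (exM f).choose_spec

noncomputable def mf (f : ℕ → ℕ → X) : ℕ := Mf f - Nf f

lemma mf_pos (f : ℕ → ℕ → X) : 0 < mf f := by
  have := (Mf_spec f).1
  unfold mf
  omega

def mk3 {m : ℕ} (k : ℕ) (c : Fin m) (p : ℕ) : Lex (ℕ × Lex (Fin m × ℕ)) :=
  toLex (k, toLex (c, p))

lemma mk3_lt_mk3 {m : ℕ} {k k' : ℕ} {c c' : Fin m} {p p' : ℕ} :
    mk3 k c p < mk3 k' c' p' ↔ k < k' ∨ (k = k' ∧ (c < c' ∨ (c = c' ∧ p < p'))) := by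
  unfold mk3
  rw [Prod.Lex.lt_iff]
  simp only [Prod.Lex.lt_iff, ofLex_toLex]

variable (f : ℕ → ℕ → X)

lemma blockEmbA (i : ℕ) (hi : Nf f ≤ i) :
    ∃ (a : ℕ → ℕ) (b : ℕ → Fin (mf f)) (c : ℕ → ℕ),
      (∀ j, a j ≤ Lf f i) ∧
      StrictMono (fun j => mk3 (a j) (b j) (c j)) ∧
      ∀ j, f (Nf f + (b j : ℕ)) (c j) = f i j := by
  obtain ⟨hK, hJ⟩ := Nf_spec f i hi
  obtain ⟨hNM, hMK, hMJ⟩ := Mf_spec f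
  set N := Nf f with hN
  set L := Lf f i with hLdef
  -- tail target block
  obtain ⟨c', hc'1, hc'2, hc'3⟩ := hMJ _ hJ
  -- prefix data
  have hpre : ∀ j : ℕ, ∃ cb pp : ℕ, N ≤ cb ∧ cb < Mf f ∧ f cb pp = f i j := by
    intro j
    obtain ⟨cb, h1, h2, h3⟩ := hMK _ (hK j)
    obtain ⟨pp, hpp⟩ := h3
    exact ⟨cb, pp, h1, h2, hpp⟩
  choose cb pp hcb1 hcb2 hcb3 using hpre
  -- tail positions
  obtain ⟨Q, hQmono, hQ⟩ := pick (P := fun j p => f c' p = f i (L + j)) (by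
    intro j b
    have hmem : f i (L + j) ∈ ISet f c' := by
      rw [hc'3]
      exact Lf_spec f i _ (Nat.le_add_right _ _)
    obtain ⟨p, hp1, hp2⟩ := unb hmem b
    exact ⟨p, hp1, hp2⟩)
  refine ⟨fun j => if j < L then j else L,
    fun j => if h : j < L then ⟨cb j - N, by have := hcb1 j; have := hcb2 j; unfold mf; omega⟩
      else ⟨c' - N, by unfold mf; omega⟩,
    fun j => if j < L then pp j else Q (j - L), ?_, ?_, ?_⟩
  · intro j
    by_cases h : j < L <;> simp [h] <;> omega
  · intro j j' hjj'
    rw [mk3_lt_mk3]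
    by_cases h : j < L <;> by_cases h' : j' < L
    · simp only [h, h', if_pos]
      exact Or.inl hjj'
    · simp only [h, h', if_pos, if_neg]
      exact Or.inl h
    · omega
    · simp only [h, h', if_neg, dif_neg]
      refine Or.inr ⟨rfl, Or.inr ⟨rfl, ?_⟩⟩
      exact hQmono (by omega)
  · intro j
    by_cases h : j < L
    · simp only [h, if_pos, dif_pos]
      rw [show N + (cb j - N) = cb j by have := hcb1 j; omega]
      exact hcb3 j
    · simp only [h, if_false, dite_false]
      rw [show N + (c' - N) = c' by omega]
      rw [hQ (j - L)]
      congr 1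
      omega

lemma chunkB (i : ℕ) (hi : Nf f ≤ i) (bd : ℕ) :
    ∃ b', bd < b' ∧ ∃ (a c : ℕ → ℕ),
      (∀ j, bd ≤ a j ∧ a j < b') ∧
      StrictMono (fun j => (toLex (a j, c j) : Lex (ℕ × ℕ))) ∧
      ∀ j, f (a j) (c j) = f i j := by
  obtain ⟨hK, hJ⟩ := Nf_spec f i hi
  set L := Lf f i with hLdef
  -- prefix blocks
  obtain ⟨R, hRmono, hR⟩ := pick (P := fun j blk => bd ≤ blk ∧ Occ f (f i j) blk) (by
    intro j b
    obtain ⟨blk, h1, h2⟩ := unb (hK j) (max b bd)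
    exact ⟨blk, le_trans (le_max_left _ _) h1, le_trans (le_max_right _ _) h1, h2⟩)
  choose po hpo using fun j => (hR j).2
  -- tail block
  obtain ⟨c'', hc''1, hc''2⟩ := unb hJ (max bd (R L + 1))
  -- tail positions
  obtain ⟨Q, hQmono, hQ⟩ := pick (P := fun j p => f c'' p = f i (L + j)) (by
    intro j b
    have hmem : f i (L + j) ∈ ISet f c'' := by
      rw [hc''2]
      exact Lf_spec f i _ (Nat.le_add_right _ _)
    obtain ⟨p, hp1, hp2⟩ := unb hmem b
    exact ⟨p, hp1, hp2⟩)
  have hRL : ∀ j, j < L → R j < c'' := by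
    intro j hj
    have h1 : R j < R L := hRmono hj
    have h2 : R L + 1 ≤ c'' := le_trans (le_max_right _ _) hc''1
    omega
  have hbdc : bd ≤ c'' := le_trans (le_max_left _ _) hc''1
  refine ⟨c'' + 1, by omega,
    fun j => if j < L then R j else c'',
    fun j => if j < L then po j else Q (j - L), ?_, ?_, ?_⟩
  · intro j
    by_cases h : j < L
    · simp only [h, if_true]
      exact ⟨(hR j).1, by have := hRL j h; omega⟩
    · simp only [h, if_false]
      exact ⟨hbdc, by omega⟩
  · intro j j' hjj'
    rw [Prod.Lex.lt_iff]
    by_cases h : j < L <;> by_cases h' : j' < L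
    · simp only [h, h', if_pos]
      exact Or.inl (hRmono hjj')
    · simp only [h, h', if_pos, if_neg]
      exact Or.inl (hRL j h)
    · omega
    · simp only [h, h', if_neg]
      exact Or.inr ⟨rfl, hQmono (by omega)⟩
  · intro j
    by_cases h : j < L
    · simp only [h, if_pos]
      exact hpo j
    · simp only [h, if_false]
      rw [hQ (j - L)]
      congr 1
      omega

noncomputable def Bt : ℕ → ℕ
  | 0 => Nf f
  | (t + 1) => (chunkB f (Nf f + t % mf f) (Nat.le_add_right _ _) (Bt t)).choose

lemma Bt_lt_succ (t : ℕ) : Bt f t < Bt f (t + 1) :=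
  (chunkB f (Nf f + t % mf f) (Nat.le_add_right _ _) (Bt f t)).choose_spec.1

lemma Bt_strictMono : StrictMono (Bt f) :=
  strictMono_nat_of_lt_succ (Bt_lt_succ f)

lemma Nf_le_Bt (t : ℕ) : Nf f ≤ Bt f t := by
  have := (Bt_strictMono f).monotone (Nat.zero_le t)
  simpa [Bt] using this

noncomputable def aB (t : ℕ) : ℕ → ℕ :=
  (chunkB f (Nf f + t % mf f) (Nat.le_add_right _ _) (Bt f t)).choose_spec.2.choose

noncomputable def cB (t : ℕ) : ℕ → ℕ :=
  (chunkB f (Nf f + t % mf f) (Nat.le_add_right _ _) (Bt f t)).choose_spec.2.choose_spec.choose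

lemma B_spec (t : ℕ) :
    (∀ j, Bt f t ≤ aB f t j ∧ aB f t j < Bt f (t + 1)) ∧
    StrictMono (fun j => (toLex (aB f t j, cB f t j) : Lex (ℕ × ℕ))) ∧
    ∀ j, f (aB f t j) (cB f t j) = f (Nf f + t % mf f) j :=
  (chunkB f (Nf f + t % mf f) (Nat.le_add_right _ _) (Bt f t)).choose_spec.2.choose_spec.choose_spec

def blkf : Fin (Nf f) → ℕ → Option X := fun i j => some (f (i : ℕ) j)

noncomputable def uf : Fin (mf f) → ℕ → X := fun c j => f (Nf f + (c : ℕ)) j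

def fL : Lex (ℕ × ℕ) → X := fun p => f (ofLex p).1 (ofLex p).2

/-- total versions of the blockEmbA choice data -/
noncomputable def aA (i : ℕ) : ℕ → ℕ :=
  (blockEmbA f (max i (Nf f)) (le_max_right _ _)).choose

noncomputable def bA (i : ℕ) : ℕ → Fin (mf f) :=
  (blockEmbA f (max i (Nf f)) (le_max_right _ _)).choose_spec.choose

noncomputable def cA (i : ℕ) : ℕ → ℕ :=
  (blockEmbA f (max i (Nf f)) (le_max_right _ _)).choose_spec.choose_spec.choose

lemma A_spec (i : ℕ) :
    (∀ j, aA f i j ≤ Lf f (max i (Nf f))) ∧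
    StrictMono (fun j => mk3 (aA f i j) (bA f i j) (cA f i j)) ∧
    ∀ j, f (Nf f + (bA f i j : ℕ)) (cA f i j) = f (max i (Nf f)) j :=
  (blockEmbA f (max i (Nf f)) (le_max_right _ _)).choose_spec.choose_spec.choose_spec

/-- offsets -/
noncomputable def Of (i : ℕ) : ℕ := ∑ t ∈ Finset.range i, (Lf f t + 1)

lemma Of_succ (i : ℕ) : Of f (i + 1) = Of f i + (Lf f i + 1) := by
  simp [Of, Finset.sum_range_succ]

lemma Of_mono : Monotone (Of f) := fun i i' h =>
  Finset.sum_le_sum_of_subset (Finset.range_subset_range.mpr h)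

lemma Of_sep (i i' : ℕ) (h : i < i') : Of f i + Lf f i < Of f i' := by
  have h1 := Of_succ f i
  have h2 : Of f (i + 1) ≤ Of f i' := Of_mono f h
  omega

noncomputable def Phi : Lex (ℕ × ℕ) → NFIndex (Nf f) (blkf f) (mf f) := fun p =>
  if h : (ofLex p).1 < Nf f then
    toLex (Sum.inl ⟨toLex ((⟨(ofLex p).1, h⟩ : Fin (Nf f)), (ofLex p).2), rfl⟩)
  else
    toLex (Sum.inr (mk3 (Of f (ofLex p).1 + aA f (ofLex p).1 (ofLex p).2)
      (bA f (ofLex p).1 (ofLex p).2) (cA f (ofLex p).1 (ofLex p).2)))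

noncomputable def Psi : NFIndex (Nf f) (blkf f) (mf f) → Lex (ℕ × ℕ) := fun w =>
  Sum.elim
    (fun q => toLex ((((ofLex (q : {q : Lex (Fin (Nf f) × ℕ) //
        (blkf f (ofLex q).1 (ofLex q).2).isSome}).val).1 : Fin (Nf f)) : ℕ), (ofLex q.val).2))
    (fun r => toLex (aB f ((ofLex r).1 * mf f + ((ofLex (ofLex r).2).1 : ℕ)) ((ofLex (ofLex r).2).2),
      cB f ((ofLex r).1 * mf f + ((ofLex (ofLex r).2).1 : ℕ)) ((ofLex (ofLex r).2).2)))
    (ofLex w)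

lemma embA : WEmb (fL f) (nfWord (Nf f) (blkf f) (mf f) (uf f)) := by
  refine ⟨Phi f, ?_, ?_⟩
  · rintro ⟨i, j⟩ ⟨i', j'⟩ hlt
    have hlt' : i < i' ∨ (i = i' ∧ j < j') := Prod.Lex.lt_iff.mp hlt
    show Phi f (toLex (i, j)) < Phi f (toLex (i', j'))
    simp only [Phi, ofLex_toLex]
    by_cases h : i < Nf f <;> by_cases h' : i' < Nf f
    · simp only [h, h', ↓reduceDIte]
      refine Sum.Lex.inl_lt_inl_iff.mpr (Subtype.mk_lt_mk.mpr (Prod.Lex.lt_iff.mpr ?_))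
      rcases hlt' with h1 | ⟨h1, h2⟩
      · exact Or.inl (by simpa [Fin.mk_lt_mk] using h1)
      · exact Or.inr ⟨by simp [h1], h2⟩
    · simp only [h, h', ↓reduceDIte]
      exact Sum.Lex.inl_lt_inr _ _
    · omega
    · simp only [h, h', ↓reduceDIte]
      push_neg at h h'
      refine Sum.Lex.inr_lt_inr_iff.mpr (mk3_lt_mk3.mpr ?_)
      have hmaxi : max i (Nf f) = i := max_eq_left h
      have hmaxi' : max i' (Nf f) = i' := max_eq_left h'
      rcases hlt' with h1 | ⟨h1, h2⟩
      · refine Or.inl ?_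
        have ha := (A_spec f i).1 j
        rw [hmaxi] at ha
        have hsep := Of_sep f i i' h1
        omega
      · subst h1
        have := (A_spec f i).2.1 h2
        rw [mk3_lt_mk3] at this
        rcases this with h3 | ⟨h3, h4⟩
        · exact Or.inl (by omega)
        · exact Or.inr ⟨by omega, h4⟩
  · rintro ⟨i, j⟩
    show fL f (toLex (i, j)) ≤ nfWord (Nf f) (blkf f) (mf f) (uf f) (Phi f (toLex (i, j)))
    simp only [Phi, ofLex_toLex]
    by_cases h : i < Nf f
    · simp only [h, ↓reduceDIte]
      exact le_of_eq rfl
    · simp only [h, ↓reduceDIte]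
      push_neg at h
      have hl := (A_spec f i).2.2 j
      rw [max_eq_left h] at hl
      exact le_of_eq hl.symm

lemma embB : WEmb (nfWord (Nf f) (blkf f) (mf f) (uf f)) (fL f) := by
  refine ⟨Psi f, ?_, ?_⟩
  · rintro (⟨⟨i, j⟩, hq⟩ | ⟨k, c, p⟩) (⟨⟨i', j'⟩, hq'⟩ | ⟨k', c', p'⟩) hlt <;>
      replace hlt := Sum.Lex.lt_def.mp hlt
    · cases hlt with
      | inl hlt2 =>
        have hlt3 : i < i' ∨ (i = i' ∧ j < j') :=
          Prod.Lex.lt_iff.mp (Subtype.mk_lt_mk.mp hlt2)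
        show (toLex (((i : Fin (Nf f)) : ℕ), j) : Lex (ℕ × ℕ)) < toLex (((i' : Fin (Nf f)) : ℕ), j')
        refine Prod.Lex.lt_iff.mpr ?_
        rcases hlt3 with h1 | ⟨h1, h2⟩
        · exact Or.inl (by exact_mod_cast h1)
        · exact Or.inr ⟨by rw [h1]; rfl, h2⟩
    · show (toLex (((i : Fin (Nf f)) : ℕ), j) : Lex (ℕ × ℕ)) <
        toLex (aB f (k' * mf f + ((c' : Fin (mf f)) : ℕ)) p', cB f (k' * mf f + (c' : ℕ)) p')
      refine Prod.Lex.lt_iff.mpr (Or.inl ?_)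
      have h1 : (i : ℕ) < Nf f := i.2
      have h2 := Nf_le_Bt f (k' * mf f + (c' : ℕ))
      have h3 := ((B_spec f (k' * mf f + (c' : ℕ))).1 p').1
      simp only [ofLex_toLex]; omega
    · cases hlt
    · cases hlt with
      | inr hlt2 =>
        have hlt' : k < k' ∨ (k = k' ∧ (c < c' ∨ (c = c' ∧ p < p'))) :=
          mk3_lt_mk3.mp hlt2
        show (toLex (aB f (k * mf f + ((c : Fin (mf f)) : ℕ)) p, cB f (k * mf f + (c : ℕ)) p) :
            Lex (ℕ × ℕ)) <
          toLex (aB f (k' * mf f + ((c' : Fin (mf f)) : ℕ)) p', cB f (k' * mf f + (c' : ℕ)) p')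
        set t := k * mf f + (c : ℕ) with ht
        set t' := k' * mf f + (c' : ℕ) with ht'
        refine Prod.Lex.lt_iff.mpr ?_
        have htt : t < t' ∨ (t = t' ∧ p < p') := by
          rcases hlt' with h1 | ⟨h1, h2 | ⟨h2, h3⟩⟩
          · left
            calc t < (k + 1) * mf f := by rw [ht]; nlinarith [c.2]
            _ ≤ k' * mf f := Nat.mul_le_mul_right (mf f) h1
            _ ≤ t' := Nat.le_add_right _ _
          · left
            subst h1
            have hcc : (c : ℕ) < (c' : ℕ) := h2
            omega
          · right
            exact ⟨by rw [ht, ht', h1, h2], h3⟩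
        rcases htt with h1 | ⟨h1, h2⟩
        · refine Or.inl ?_
          have ha := ((B_spec f t).1 p).2
          have hb := ((B_spec f t').1 p').1
          have hmono : Bt f (t + 1) ≤ Bt f t' := (Bt_strictMono f).monotone h1
          simp only [ofLex_toLex]; omega
        · rw [h1]
          have := (B_spec f t').2.1 h2
          exact Prod.Lex.lt_iff.mp this
  · rintro (⟨⟨i, j⟩, hq⟩ | ⟨k, c, p⟩)
    · exact le_of_eq rfl
    · set t := k * mf f + (c : ℕ) with ht
      have hmod : t % mf f = (c : ℕ) := by
        rw [ht, Nat.add_comm, Nat.add_mul_mod_self_right, Nat.mod_eq_of_lt c.2]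
      have h1 : f (aB f t p) (cB f t p) = f (Nf f + (c : ℕ)) p := by
        rw [(B_spec f t).2.2 p, hmod]
      exact le_of_eq h1.symm

lemma wemb_iso_left {ι κ μ : Type*} [LinearOrder ι] [LinearOrder κ] [LinearOrder μ]
    {Y : Type*} [Preorder Y] (e : ι ≃o κ) (t : κ → Y) (u : μ → Y)
    (h : WEmb (fun i => t (e i)) u) : WEmb t u := by
  obtain ⟨φ, h1, h2⟩ := h
  refine ⟨fun k => φ (e.symm k), h1.comp e.symm.strictMono, fun k => ?_⟩
  simpa using h2 (e.symm k)

lemma wemb_iso_right {ι κ μ : Type*} [LinearOrder ι] [LinearOrder κ] [LinearOrder μ]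
    {Y : Type*} [Preorder Y] (e : ι ≃o κ) (t : κ → Y) (u : μ → Y)
    (h : WEmb u (fun i => t (e i))) : WEmb u t := by
  obtain ⟨φ, h1, h2⟩ := h
  exact ⟨fun i => e (φ i), e.strictMono.comp h1, h2⟩

end OmegaSqNF

/-- Over a finite alphabet, every word of length ω² is equivalent to
w · (u₁ ⋯ u_m)^ω, where w is a finite concatenation of words each of length
≤ ω (so w has length < ω²) and u₁, …, u_m are ω-words. -/
theorem omega_sq_word_normal_form (X : Type u) [Preorder X] [Finite X]
    (s : TransWord X) (hlen : s.len = omega0 ^ 2) :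
    ∃ (n : ℕ) (blocks : Fin n → ℕ → Option X) (m : ℕ) (u : Fin m → ℕ → X),
      0 < m ∧ (∀ i : Fin n, InitialSeg' (blocks i)) ∧
      WEmb s.val (nfWord n blocks m u) ∧ WEmb (nfWord n blocks m u) s.val := by
  classical
  haveI : IsWellOrder s.len.ToType (· < ·) := isWellOrder_lt
  have h2 : Ordinal.lift.{u, 0} (Ordinal.type ((· < ·) : Lex (ℕ × ℕ) → Lex (ℕ × ℕ) → Prop)) =
      Ordinal.lift.{0, u} (Ordinal.type ((· < ·) : s.len.ToType → s.len.ToType → Prop)) := by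
    rw [type_toType, hlen, lift_uzero]
    rw [show (Ordinal.type ((· < ·) : Lex (ℕ × ℕ) → Lex (ℕ × ℕ) → Prop)) = omega0 * omega0 from by
      rw [← type_nat_lt]; exact type_prod_lex _ _]
    rw [lift_mul, lift_omega0, sq]
  have E : Lex (ℕ × ℕ) ≃o s.len.ToType := OrderIso.ofRelIsoLT (lift_type_eq.mp h2).some
  set F : ℕ → ℕ → X := fun i j => s.val (E (toLex (i, j))) with hF
  have hfl : (fun p : Lex (ℕ × ℕ) => s.val (E p)) = OmegaSqNF.fL F := rfl
  refine ⟨OmegaSqNF.Nf F, OmegaSqNF.blkf F, OmegaSqNF.mf F, OmegaSqNF.uf F,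
    OmegaSqNF.mf_pos F, fun i a b _ _ => rfl, ?_, ?_⟩
  · refine OmegaSqNF.wemb_iso_left E s.val _ ?_
    rw [show (fun i => s.val (E i)) = OmegaSqNF.fL F from rfl]
    exact OmegaSqNF.embA F
  · refine OmegaSqNF.wemb_iso_right E s.val _ ?_
    rw [show (fun i => s.val (E i)) = OmegaSqNF.fL F from rfl]
    exact OmegaSqNF.embB F
end
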